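/- Let C ≥ 0, let P_1, …, P_n and S_1, …, S_m be finite nonempty subsets of ℝ^n, and define J(x_1, …, x_n, ω, b) = (1/2)‖ω‖² + C · Σ_{i=1}^n max(−1, −⟨ω, x_i⟩ − b) + C · Σ_{j=1}^m max(−1, max_{y ∈ S_j} (⟨ω, y⟩ + b)) for x_i ∈ P_i. Suppose sequences (x^{(k)})_{k≥1} with x_i^{(k)} ∈ P_i and (ω_k, b_k)_{k≥1} satisfy, for each k > 1: (i) ⟨ω_{k−1}, x_i^{(k)}⟩ + b_{k−1} = max_{x ∈ P_i} (⟨ω_{k−1}, x⟩ + b_{k−1}) for every i, and (ii) J(x^{(k)}, ω_k, b_k) ≤ J(x^{(k)}, ω, b) for all (ω, b) ∈ ℝ^n × ℝ. Then the sequence of objective values obj(k) = J(x^{(k)}, ω_k, b_k) is non-increasing in k, is bounded below by −C(n + m), and hence converges. (The convergence claim of Theorem 1 of the paper.) -/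

import Mathlib

/-!
At step `k + 1` the selected points maximize the score `⟪ω k, ·⟫ + b k`, so at `(ω k, b k)` their
hinge loss is at most that of the old points; minimizing over `(ω, b)` lowers the objective
further. Each hinge term is at least `-1`, which bounds the objective below, and a monotone
bounded sequence converges.
-/

open scoped RealInnerProductSpace

open Filter Topology

section Hinge

variable {ι κ : Type*} [Fintype ι] [Fintype κ]

lemma neg_card_le_sum_max_neg_one (f : ι → ℝ) :
    -(Fintype.card ι : ℝ) ≤ ∑ i, max (-1 : ℝ) (f i) :=
  calc -(Fintype.card ι : ℝ) = ∑ _i : ι, (-1 : ℝ) := by simp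
    _ ≤ ∑ i, max (-1 : ℝ) (f i) := Finset.sum_le_sum fun i _ => le_max_left _ _

lemma neg_mul_card_add_card_le_hinge_objective {C : ℝ} (hC : 0 ≤ C) (r : ℝ)
    (f : ι → ℝ) (g : κ → ℝ) :
    -C * (Fintype.card ι + Fintype.card κ) ≤
      1 / 2 * r ^ 2 + C * ∑ i, max (-1 : ℝ) (f i) + C * ∑ j, max (-1 : ℝ) (g j) := by
  have hf := mul_le_mul_of_nonneg_left (neg_card_le_sum_max_neg_one f) hC
  have hg := mul_le_mul_of_nonneg_left (neg_card_le_sum_max_neg_one g) hC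
  nlinarith [sq_nonneg r]

lemma sum_hinge_le_of_isMaximizer {E : Type*} [NormedAddCommGroup E] [InnerProductSpace ℝ E]
    (P : ι → Finset E) (hP : ∀ i, (P i).Nonempty) (w : E) (c : ℝ) {x x' : ι → E}
    (hx : ∀ i, x i ∈ P i)
    (hx' : ∀ i, ⟪w, x' i⟫ + c = (P i).sup' (hP i) fun z => ⟪w, z⟫ + c) :
    ∑ i, max (-1 : ℝ) (-⟪w, x' i⟫ - c) ≤ ∑ i, max (-1 : ℝ) (-⟪w, x i⟫ - c) := by
  refine Finset.sum_le_sum fun i _ => max_le_max le_rfl ?_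
  have hle := Finset.le_sup' (fun z => ⟪w, z⟫ + c) (hx i)
  rw [← hx' i] at hle
  linarith

end Hinge

lemma exists_tendsto_of_antitone_from_of_bddBelow {α : Type*}
    [ConditionallyCompleteLinearOrder α] [TopologicalSpace α] [OrderTopology α]
    (f : ℕ → α) (k₀ : ℕ) (L : α) (hmono : ∀ k, k₀ ≤ k → f (k + 1) ≤ f k)
    (hbdd : ∀ k, k₀ ≤ k → L ≤ f k) : ∃ l, Tendsto f atTop (𝓝 l) := by
  have hanti : Antitone fun k => f (k + k₀) :=
    antitone_nat_of_succ_le fun k => by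
      simpa [Nat.add_right_comm] using hmono (k + k₀) (Nat.le_add_left _ _)
  have hbdd' : BddBelow (Set.range fun k => f (k + k₀)) := by
    refine ⟨L, ?_⟩
    rintro _ ⟨k, rfl⟩
    exact hbdd _ (Nat.le_add_left _ _)
  exact ⟨_, (tendsto_add_atTop_iff_nat k₀).mp (tendsto_atTop_ciInf hanti hbdd')⟩

/-- Theorem 1: along the iterates of the Cutting Plane Algorithm, the objective values
`obj(k) = J(x^{(k)}, ω_k, b_k)` are non-increasing, bounded below by `−C(n+m)`, and
hence converge. -/
theorem cutting_plane_objective_converges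
    (n m : ℕ) (C : ℝ) (hC : 0 ≤ C)
    (P : Fin n → Finset (EuclideanSpace ℝ (Fin n))) (hP : ∀ i, (P i).Nonempty)
    (S : Fin m → Finset (EuclideanSpace ℝ (Fin n))) (hS : ∀ j, (S j).Nonempty)
    (J : (Fin n → EuclideanSpace ℝ (Fin n)) → EuclideanSpace ℝ (Fin n) → ℝ → ℝ)
    (hJ : ∀ xs w c, J xs w c =
      (1 / 2) * ‖w‖ ^ 2 +
        C * ∑ i : Fin n, max (-1 : ℝ) (-⟪w, xs i⟫ - c) +
        C * ∑ j : Fin m, max (-1 : ℝ) ((S j).sup' (hS j) fun y => ⟪w, y⟫ + c))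
    (x : ℕ → Fin n → EuclideanSpace ℝ (Fin n))
    (hxmem : ∀ k i, x k i ∈ P i)
    (ω : ℕ → EuclideanSpace ℝ (Fin n)) (b : ℕ → ℝ)
    (hselect : ∀ k, 1 < k → ∀ i,
      ⟪ω (k - 1), x k i⟫ + b (k - 1) =
        (P i).sup' (hP i) fun z => ⟪ω (k - 1), z⟫ + b (k - 1))
    (hminimize : ∀ k, 1 < k →
      ∀ (w : EuclideanSpace ℝ (Fin n)) (c : ℝ), J (x k) (ω k) (b k) ≤ J (x k) w c) :
    (∀ k, 1 ≤ k → J (x (k + 1)) (ω (k + 1)) (b (k + 1)) ≤ J (x k) (ω k) (b k)) ∧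
    (∀ k, 1 ≤ k → -C * (n + m) ≤ J (x k) (ω k) (b k)) ∧
    (∃ L : ℝ, Filter.Tendsto (fun k => J (x k) (ω k) (b k)) Filter.atTop (nhds L)) := by
  have hmono : ∀ k, 1 ≤ k → J (x (k + 1)) (ω (k + 1)) (b (k + 1)) ≤ J (x k) (ω k) (b k) := by
    intro k hk
    have hsel := hselect (k + 1) (by omega)
    simp only [Nat.add_sub_cancel] at hsel
    calc J (x (k + 1)) (ω (k + 1)) (b (k + 1)) ≤ J (x (k + 1)) (ω k) (b k) :=
          hminimize (k + 1) (by omega) (ω k) (b k)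
      _ ≤ J (x k) (ω k) (b k) := by
          rw [hJ, hJ]
          gcongr _ + C * ?_ + _
          exact sum_hinge_le_of_isMaximizer P hP (ω k) (b k) (hxmem k) hsel
  have hbound : ∀ k, 1 ≤ k → -C * (n + m) ≤ J (x k) (ω k) (b k) := fun k _ => by
    rw [hJ]
    simpa using neg_mul_card_add_card_le_hinge_objective hC ‖ω k‖
      (fun i => -⟪ω k, x k i⟫ - b k) fun j => (S j).sup' (hS j) fun y => ⟪ω k, y⟫ + b k
  exact ⟨hmono, hbound, exists_tendsto_of_antitone_from_of_bddBelow _ 1 _ hmono hbound⟩
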